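/- arXiv:2511.03870 — 5 statements merged into one kernel-verified Lean document; each statement's English description precedes it below -/
import Mathlib

section
/- For every integer N ≥ 2, the N-qubit CNOT ladder satisfies (Ladder_CNOT)^{2^{⌈log₂ N⌉}} = I, where I is the identity on (ℂ²)^{⊗N} and ⌈log₂ N⌉ is the least integer m with N ≤ 2^m. -/
open Complex

noncomputable section

/-- Basis states of `N` qubits: bit strings of length `N` (qubit `k` (1-based) ↦ index `k-1`). -/
abbrev QState (N : ℕ) := Fin N → ZMod 2

/-- Operators on `(ℂ²)^{⊗N}`, as matrices in the computational basis. -/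
abbrev QOp (N : ℕ) := Matrix (QState N) (QState N) ℂ

/-- Ry(θ) = [[cos(θ/2), −sin(θ/2)], [sin(θ/2), cos(θ/2)]]. -/
def RyM (θ : ℝ) : Matrix (ZMod 2) (ZMod 2) ℂ :=
  Matrix.of fun a b =>
    if a = 0 then (if b = 0 then ((Real.cos (θ/2) : ℝ) : ℂ) else -((Real.sin (θ/2) : ℝ) : ℂ))
    else (if b = 0 then ((Real.sin (θ/2) : ℝ) : ℂ) else ((Real.cos (θ/2) : ℝ) : ℂ))

/-- Rz(θ) = diag(e^{−iθ/2}, e^{iθ/2}). -/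
def RzM (θ : ℝ) : Matrix (ZMod 2) (ZMod 2) ℂ :=
  Matrix.of fun a b =>
    if a = b then
      (if a = 0 then Complex.exp (-(θ/2 : ℝ) * Complex.I) else Complex.exp ((θ/2 : ℝ) * Complex.I))
    else 0

/-- Hadamard gate. -/
def HM : Matrix (ZMod 2) (ZMod 2) ℂ :=
  Matrix.of fun a b => (1 / ((Real.sqrt 2 : ℝ) : ℂ)) * (if a = 1 ∧ b = 1 then -1 else 1)

/-- T gate = diag(1, e^{iπ/4}). -/
def TM : Matrix (ZMod 2) (ZMod 2) ℂ :=
  Matrix.of fun a b =>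
    if a = b then (if a = 0 then 1 else Complex.exp ((Real.pi/4 : ℝ) * Complex.I)) else 0

/-- S gate = diag(1, i). -/
def SM : Matrix (ZMod 2) (ZMod 2) ℂ :=
  Matrix.of fun a b => if a = b then (if a = 0 then 1 else Complex.I) else 0

/-- S† gate = diag(1, −i). -/
def SdgM : Matrix (ZMod 2) (ZMod 2) ℂ :=
  Matrix.of fun a b => if a = b then (if a = 0 then 1 else -Complex.I) else 0

/-- Pauli X gate. -/
def XM : Matrix (ZMod 2) (ZMod 2) ℂ :=
  Matrix.of fun a b => if a = b then 0 else 1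

/-- A single-qubit gate `g` acting on qubit with 0-based index `k`, identity elsewhere. -/
def gate1 {N : ℕ} (g : Matrix (ZMod 2) (ZMod 2) ℂ) (k : Fin N) : QOp N :=
  Matrix.of fun x y => if ∀ j, j ≠ k → x j = y j then g (x k) (y k) else 0

/-- CZ gate on (0-based) qubits `k`, `l`. -/
def CZg {N : ℕ} (k l : Fin N) : QOp N :=
  Matrix.of fun x y => if x = y then (if x k = 1 ∧ x l = 1 then (-1 : ℂ) else 1) else 0

/-- CNOT gate with control `c` and target `t` (0-based): |y⟩ ↦ |y with bit t replaced by y t + y c⟩. -/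
def CNOTg {N : ℕ} (c t : Fin N) : QOp N :=
  Matrix.of fun x y => if x = Function.update y t (y t + y c) then (1 : ℂ) else 0

/-- The `k`-th bit (0-based) of a basis state, `0` when out of range. -/
def bitAt {N : ℕ} (x : QState N) (k : ℕ) : ZMod 2 :=
  if h : k < N then x ⟨k, h⟩ else 0

/-- Ladder of CZ gates: `∏_{k=1}^{N−1} CZ_{k,k+1}` (all factors commute, so it is
the diagonal matrix with entry `(−1)^{#{adjacent 11 pairs}}`). -/
def ladderCZ (N : ℕ) : QOp N :=
  Matrix.of fun x y =>
    if x = y then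
      ∏ k ∈ Finset.range (N - 1), (if bitAt x k = 1 ∧ bitAt x (k + 1) = 1 then (-1 : ℂ) else 1)
    else 0

/-- First CNOT layer of the ladder: simultaneous CNOT_{k+1,k} for 1-based `k ∈ {1,…,N−1}`,
`k ≢ N (mod 2)` (control qubit `k+1`, target qubit `k`; disjoint pairs). -/
def layer1Map (N : ℕ) (y : QState N) : QState N :=
  fun i => if (i : ℕ) + 1 < N ∧ ((i : ℕ) + 1) % 2 ≠ N % 2 then y i + bitAt y ((i : ℕ) + 1) else y i

/-- Second CNOT layer of the ladder: simultaneous CNOT_{k+1,k} for 1-based `k ∈ {1,…,N−1}`,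
`k ≡ N (mod 2)`. -/
def layer2Map (N : ℕ) (y : QState N) : QState N :=
  fun i => if (i : ℕ) + 1 < N ∧ ((i : ℕ) + 1) % 2 = N % 2 then y i + bitAt y ((i : ℕ) + 1) else y i

/-- Ladder of CNOT gates: `L₂ · L₁` with `L₁` applied first. It is a permutation
matrix of the composed bit-string map. -/
def ladderCNOT (N : ℕ) : QOp N :=
  Matrix.of fun x y => if x = layer2Map N (layer1Map N y) then (1 : ℂ) else 0

/-- Rotation layer `⊗_{k} Rz(β_k)·Ry(α_k)`. -/
def rotYZ {N : ℕ} (α β : Fin N → ℝ) : QOp N :=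
  Matrix.of fun x y => ∏ k : Fin N, (RzM (β k) * RyM (α k)) (x k) (y k)

/-- The Ry-Rz-CZ ansatz of depth `M`:
`R_M · Ladder_CZ · R_{M−1} ⋯ Ladder_CZ · R_0` (`R_0` applied first), with
rotation layer `i` using angles `α i`, `β i`. -/
def ansatzYZ (N : ℕ) (α β : ℕ → Fin N → ℝ) : ℕ → QOp N
  | 0 => rotYZ (α 0) (β 0)
  | (M + 1) => rotYZ (α (M + 1)) (β (M + 1)) * ladderCZ N * ansatzYZ N α β M

/-- Rotation layer `⊗_{k} Ry(α_k)`. -/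
def rotY {N : ℕ} (α : Fin N → ℝ) : QOp N :=
  Matrix.of fun x y => ∏ k : Fin N, RyM (α k) (x k) (y k)

/-- The Ry-CNOT ansatz of depth `M`:
`R_M · Ladder_CNOT · R_{M−1} ⋯ Ladder_CNOT · R_0` (`R_0` applied first). -/
def ansatzY (N : ℕ) (α : ℕ → Fin N → ℝ) : ℕ → QOp N
  | 0 => rotY (α 0)
  | (M + 1) => rotY (α (M + 1)) * ladderCNOT N * ansatzY N α M

/-- Product of CZ gates `CZ_{q,q+1}` (1-based qubits) over all `q` satisfying `P`
(a diagonal matrix, since all CZ's commute). -/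
def czLayer (N : ℕ) (P : ℕ → Prop) [DecidablePred P] : QOp N :=
  Matrix.of fun x y =>
    if x = y then
      ∏ p ∈ Finset.range N,
        (if P (p + 1) ∧ bitAt x p = 1 ∧ bitAt x (p + 1) = 1 then (-1 : ℂ) else 1)
    else 0

/-- Hadamard gates on all 1-based qubits `q` satisfying `P`, identity elsewhere. -/
def hadOn (N : ℕ) (P : ℕ → Prop) [DecidablePred P] : QOp N :=
  Matrix.of fun x y =>
    ∏ k : Fin N, (if P ((k : ℕ) + 1) then HM (x k) (y k) else if x k = y k then (1 : ℂ) else 0)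

/-- The circuit `D_k` (1-based qubits, rightmost factor applied first):
`D_{2i} = (∏_{j=1}^{i−1} CZ_{2j,2j+1}) · (∏_{q=2}^{2i} H_q) · (∏_{j=1}^{i} CZ_{2j−1,2j})`,
`D_{2i+1} = (∏_{j=1}^{i} CZ_{2j,2j+1}) · (∏_{q=2}^{2i+1} H_q) · (∏_{j=1}^{i} CZ_{2j−1,2j})`. -/
def Dgate (N k : ℕ) : QOp N :=
  czLayer N (fun p => p % 2 = 0 ∧ 2 ≤ p ∧ p ≤ k - 1) *
    hadOn N (fun q => 2 ≤ q ∧ q ≤ k) *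
    czLayer N (fun p => p % 2 = 1 ∧ p ≤ k - 1)

/-- `U ⊗ I`: the operator acting as `U` on qubits `1,…,N` and identity on `A` ancilla qubits. -/
def embed (N A : ℕ) (U : QOp N) : QOp (N + A) :=
  Matrix.of fun x y =>
    U (fun i => x (Fin.castAdd A i)) (fun i => y (Fin.castAdd A i)) *
      (if ∀ i : Fin A, x (Fin.natAdd N i) = y (Fin.natAdd N i) then (1 : ℂ) else 0)

end
noncomputable section LadderAux

open Function

/-- The bit-string map implemented by the CNOT ladder. -/
def gmap (N : ℕ) : QState N → QState N := fun y => layer2Map N (layer1Map N y)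

lemma bitAt_add {N : ℕ} (x y : QState N) (k : ℕ) :
    bitAt (x + y) k = bitAt x k + bitAt y k := by
  unfold bitAt; split <;> simp

lemma layer1Map_add {N : ℕ} (x y : QState N) :
    layer1Map N (x + y) = layer1Map N x + layer1Map N y := by
  funext i
  simp only [layer1Map, Pi.add_apply, bitAt_add]
  split <;> ring

lemma layer2Map_add {N : ℕ} (x y : QState N) :
    layer2Map N (x + y) = layer2Map N x + layer2Map N y := by
  funext i
  simp only [layer2Map, Pi.add_apply, bitAt_add]
  split <;> ring

lemma gmap_add {N : ℕ} (x y : QState N) :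
    gmap N (x + y) = gmap N x + gmap N y := by
  unfold gmap
  rw [layer1Map_add, layer2Map_add]

lemma bitAt_eq_zero {N : ℕ} (t : ℕ) (x : QState N)
    (hx : ∀ j : Fin N, t ≤ (j : ℕ) → x j = 0) (k : ℕ) (hk : t ≤ k) : bitAt x k = 0 := by
  unfold bitAt
  split
  · exact hx _ hk
  · rfl

lemma gmap_eq_self {N : ℕ} (t : ℕ) (x : QState N)
    (hx : ∀ j : Fin N, t ≤ (j : ℕ) → x j = 0)
    (j : Fin N) (hj : t ≤ (j : ℕ) + 1) : gmap N x j = x j := by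
  set z := layer1Map N x with hz
  have ha : ∀ i : Fin N, t ≤ (i : ℕ) + 1 → z i = x i := by
    intro i hi
    simp only [hz, layer1Map]
    split
    · rw [bitAt_eq_zero t x hx _ hi, add_zero]
    · rfl
  have hb : ∀ i : Fin N, t ≤ (i : ℕ) → z i = 0 := by
    intro i hi
    rw [ha i (hi.trans (Nat.le_succ _))]
    exact hx i hi
  show layer2Map N z j = x j
  simp only [layer2Map]
  split
  · rw [bitAt_eq_zero t z hb _ hj, add_zero]
    exact ha j hj
  · exact ha j hj

/-- The linear map induced by `gmap`. -/
def glin (N : ℕ) : Module.End (ZMod 2) (QState N) :=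
  AddMonoidHom.toZModLinearMap 2 (AddMonoidHom.mk' (gmap N) gmap_add)

lemma glin_apply {N : ℕ} (x : QState N) : glin N x = gmap N x := rfl

lemma tlin_iter_eq_zero {N : ℕ} (k : ℕ) (x : QState N) (j : Fin N)
    (hj : N ≤ (j : ℕ) + k) : (⇑(glin N - 1))^[k] x j = 0 := by
  induction k generalizing x j with
  | zero => exact absurd (hj.trans_lt (by simpa using j.isLt)) (lt_irrefl _)
  | succ k ih =>
    rw [Function.iterate_succ_apply']
    have hx : ∀ i : Fin N, N - k ≤ (i : ℕ) → (⇑(glin N - 1))^[k] x i = 0 := by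
      intro i hi
      exact ih x i (Nat.sub_le_iff_le_add.mp hi)
    have hj' : N - k ≤ (j : ℕ) + 1 := by omega
    rw [LinearMap.sub_apply, Module.End.one_apply, Pi.sub_apply, glin_apply,
      gmap_eq_self (N - k) _ hx j hj', sub_self]

lemma tlin_pow_eq_zero {N : ℕ} : (glin N - 1) ^ N = 0 := by
  apply LinearMap.ext
  intro x
  funext j
  rw [Module.End.pow_apply]
  exact tlin_iter_eq_zero N x j (Nat.le_add_left _ _)

lemma add_self_end {N : ℕ} (T : Module.End (ZMod 2) (QState N)) : T + T = 0 := by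
  apply LinearMap.ext
  intro x
  funext j
  have h : ∀ a : ZMod 2, a + a = 0 := by decide
  simp [h (T x j)]

lemma one_add_pow_two_pow {N : ℕ} (T : Module.End (ZMod 2) (QState N)) (m : ℕ) :
    (1 + T) ^ (2 ^ m) = 1 + T ^ (2 ^ m) := by
  induction m with
  | zero => simp
  | succ m ih =>
    have h2 : 2 ^ (m + 1) = 2 ^ m * 2 := by ring
    rw [h2, pow_mul, ih, pow_mul]
    have expand : (1 + T ^ 2 ^ m) ^ 2 =
        1 + (T ^ 2 ^ m + T ^ 2 ^ m) + (T ^ 2 ^ m) ^ 2 := by noncomm_ring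
    rw [expand, add_self_end, add_zero]

lemma glin_pow_eq_one (N : ℕ) (hN : 2 ≤ N) :
    (glin N) ^ (2 ^ Nat.clog 2 N) = 1 := by
  have key : glin N = 1 + (glin N - 1) := by abel
  rw [key, one_add_pow_two_pow]
  have hle : N ≤ 2 ^ Nat.clog 2 N := Nat.le_pow_clog (by norm_num) N
  have : (glin N - 1) ^ (2 ^ Nat.clog 2 N) = 0 := by
    rw [show 2 ^ Nat.clog 2 N = N + (2 ^ Nat.clog 2 N - N) by omega, pow_add,
      tlin_pow_eq_zero, zero_mul]
  rw [this, add_zero]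

lemma gmap_iterate_eq_id (N : ℕ) (hN : 2 ≤ N) :
    (gmap N)^[2 ^ Nat.clog 2 N] = id := by
  funext x
  have := congrArg (fun f : Module.End (ZMod 2) (QState N) => f x) (glin_pow_eq_one N hN)
  simp only [Module.End.pow_apply] at this
  exact this

/-- functional matrix -/
def funMat {S : Type*} [Fintype S] [DecidableEq S] (f : S → S) : Matrix S S ℂ :=
  Matrix.of fun x y => if x = f y then 1 else 0

lemma funMat_mul {S : Type*} [Fintype S] [DecidableEq S] (f h : S → S) :
    funMat f * funMat h = funMat (f ∘ h) := by
  ext x y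
  simp only [funMat, Matrix.mul_apply, Matrix.of_apply, Function.comp]
  rw [Finset.sum_eq_single (h y)]
  · simp
  · intro b _ hb
    simp [hb]
  · simp

lemma funMat_pow {S : Type*} [Fintype S] [DecidableEq S] (f : S → S) (n : ℕ) :
    funMat f ^ n = funMat f^[n] := by
  induction n with
  | zero =>
    ext x y
    simp [funMat, Matrix.one_apply, eq_comm]
    congr
  | succ n ih =>
    rw [pow_succ, ih, funMat_mul, ← Function.iterate_succ]

lemma ladderCNOT_eq_funMat (N : ℕ) : ladderCNOT N = funMat (gmap N) := rfl

end LadderAux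

/-- for every `N ≥ 2`, `(Ladder_CNOT)^{2^{⌈log₂ N⌉}} = I` on `N` qubits.
(`Nat.clog 2 N` is the least `m` with `N ≤ 2^m`.) -/


theorem ladderCNOT_pow_eq_one (N : ℕ) (hN : 2 ≤ N) :
    (ladderCNOT N) ^ (2 ^ Nat.clog 2 N) = 1 := by
  rw [ladderCNOT_eq_funMat, funMat_pow, gmap_iterate_eq_id N hN]
  ext x y
  simp [funMat, Matrix.one_apply, eq_comm]
end

section
/- Let N ≥ 2 and let C₁ and C₂ be N-qubit Ry-Rz-CZ ansatz circuits of depths M₁ and M₂ respectively (with arbitrary real angles). Then there exist real angles such that the N-qubit Ry-Rz-CZ ansatz circuit of depth M₁ + M₂ + 2 with those angles equals the product C₂·C₁ (C₁ applied first). -/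
open Complex

section Aux

lemma RzM_zero : RzM 0 = 1 := by
  ext a b
  simp only [RzM, Matrix.of_apply, Matrix.one_apply]
  split_ifs <;> simp

lemma RyM_zero : RyM 0 = 1 := by
  ext a b
  fin_cases a <;> fin_cases b <;>
    simp [RyM, Matrix.one_apply] <;> rfl

lemma rotYZ_zero (N : ℕ) :
    rotYZ (N := N) (fun _ => 0) (fun _ => 0) = 1 := by
  ext x y
  simp only [rotYZ, Matrix.of_apply, RzM_zero, RyM_zero, one_mul]
  by_cases h : x = y
  · subst h; simp [Matrix.one_apply]
  · obtain ⟨k, hk⟩ : ∃ k, x k ≠ y k := by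
      by_contra hc
      push_neg at hc
      exact h (funext hc)
    rw [Matrix.one_apply_ne' (Ne.symm h)]
    exact Finset.prod_eq_zero (Finset.mem_univ k) (by simp [Matrix.one_apply, hk])

lemma ladderCZ_sq (N : ℕ) : ladderCZ N * ladderCZ N = 1 := by
  ext x y
  simp only [Matrix.mul_apply, ladderCZ, Matrix.of_apply, Matrix.one_apply]
  rw [Finset.sum_eq_single x]
  · by_cases h : x = y
    · subst h
      simp only [eq_self_iff_true, if_true, ← Finset.prod_mul_distrib]
      exact Finset.prod_eq_one fun k _ => by split_ifs <;> ring
    · simp [h, Ne.symm h]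
  · intro z _ hz
    simp [Ne.symm hz]
  · simp

lemma ansatzYZ_succ (N : ℕ) (α β : ℕ → Fin N → ℝ) (M : ℕ) :
    ansatzYZ N α β (M + 1) =
      rotYZ (α (M + 1)) (β (M + 1)) * ladderCZ N * ansatzYZ N α β M := rfl

lemma ansatz_split (N : ℕ) (α β : ℕ → Fin N → ℝ) (a b : ℕ) :
    ansatzYZ N α β (a + b + 1) =
      ansatzYZ N (fun i => α (i + (a + 1))) (fun i => β (i + (a + 1))) b *
        ladderCZ N * ansatzYZ N α β a := by
  induction b with
  | zero => simp [ansatzYZ_succ, ansatzYZ]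
  | succ b ih =>
    have h1 : a + (b + 1) + 1 = (a + b + 1) + 1 := by ring
    rw [h1, ansatzYZ_succ, ih, ansatzYZ_succ]
    have h2 : b + 1 + (a + 1) = a + (b + 1) + 1 := by ring
    rw [h2]
    ring_nf
    noncomm_ring

end Aux

/-- concatenating two `N`-qubit Ry-Rz-CZ ansatz circuits of depths `M₁`, `M₂`
gives an Ry-Rz-CZ ansatz circuit of depth `M₁ + M₂ + 2` (for suitable angles),
`C₁` applied first. -/
theorem ansatzYZ_concat (N : ℕ) (hN : 2 ≤ N) (M₁ M₂ : ℕ)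
    (α₁ β₁ α₂ β₂ : ℕ → Fin N → ℝ) :
    ∃ α β : ℕ → Fin N → ℝ,
      ansatzYZ N α β (M₁ + M₂ + 2) = ansatzYZ N α₂ β₂ M₂ * ansatzYZ N α₁ β₁ M₁ := by
  classical
  set α : ℕ → Fin N → ℝ := fun i =>
    if i ≤ M₁ then α₁ i else if i = M₁ + 1 then (fun _ => 0) else α₂ (i - (M₁ + 2)) with hα
  set β : ℕ → Fin N → ℝ := fun i =>
    if i ≤ M₁ then β₁ i else if i = M₁ + 1 then (fun _ => 0) else β₂ (i - (M₁ + 2)) with hβ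
  refine ⟨α, β, ?_⟩
  have hlow : ansatzYZ N α β M₁ = ansatzYZ N α₁ β₁ M₁ := by
    have : ∀ M, M ≤ M₁ → ansatzYZ N α β M = ansatzYZ N α₁ β₁ M := by
      intro M
      induction M with
      | zero => intro h; simp [ansatzYZ, hα, hβ]
      | succ M ih =>
        intro h
        rw [ansatzYZ_succ, ansatzYZ_succ, ih (Nat.le_of_succ_le h)]
        have hα' : α (M + 1) = α₁ (M + 1) := by simp [hα, h]
        have hβ' : β (M + 1) = β₁ (M + 1) := by simp [hβ, h]
        rw [hα', hβ']
    exact this M₁ le_rfl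
  have hsplit1 : M₁ + M₂ + 2 = M₁ + (M₂ + 1) + 1 := by ring
  rw [hsplit1, ansatz_split]
  have e : M₂ + 1 = 0 + M₂ + 1 := by ring
  rw [e, ansatz_split N _ _ 0 M₂]
  have hz : ansatzYZ N (fun i => α (i + (M₁ + 1))) (fun i => β (i + (M₁ + 1))) 0 = 1 := by
    show rotYZ (α (0 + (M₁ + 1))) (β (0 + (M₁ + 1))) = 1
    have h1 : α (0 + (M₁ + 1)) = fun _ => 0 := by simp [hα]
    have h2 : β (0 + (M₁ + 1)) = fun _ => 0 := by simp [hβ]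
    rw [h1, h2, rotYZ_zero]
  have ea : (fun i : ℕ => α (i + (0 + 1) + (M₁ + 1))) = α₂ := by
    funext i
    simp only [hα]
    rw [if_neg (by omega), if_neg (by omega),
      show i + (0 + 1) + (M₁ + 1) - (M₁ + 2) = i by omega]
  have eb : (fun i : ℕ => β (i + (0 + 1) + (M₁ + 1))) = β₂ := by
    funext i
    simp only [hβ]
    rw [if_neg (by omega), if_neg (by omega),
      show i + (0 + 1) + (M₁ + 1) - (M₁ + 2) = i by omega]
  have hhigh : ansatzYZ N (fun i => α (i + (0 + 1) + (M₁ + 1)))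
      (fun i => β (i + (0 + 1) + (M₁ + 1))) M₂ = ansatzYZ N α₂ β₂ M₂ := by
    rw [ea, eb]
  rw [hz, hhigh, hlow, mul_one, mul_assoc _ (ladderCZ N) (ladderCZ N), ladderCZ_sq, mul_one]
end

section
/- For every integer N ≥ 2 and every k with 1 ≤ k ≤ N−1, there exist an integer M ≤ 32·N + 18, real rotation angles, and a real phase φ such that the N-qubit Ry-Rz-CZ ansatz circuit of depth M with those angles equals e^{iφ}·CZ_{k,k+1}. -/
open Complex

noncomputable section Aux
namespace CZAux
open Finset

variable {N : ℕ}

def cf {N : ℕ} (f : QState N → QState N) (c : QState N → ℂ) : QOp N :=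
  Matrix.of fun x y => if x = f y then c y else 0

lemma cf_mul (f₁ f₂ : QState N → QState N) (c₁ c₂ : QState N → ℂ) :
    cf f₁ c₁ * cf f₂ c₂ = cf (f₁ ∘ f₂) (fun y => c₂ y * c₁ (f₂ y)) := by
  ext x y
  simp only [Matrix.mul_apply, cf, Matrix.of_apply]
  rw [Finset.sum_eq_single (f₂ y)]
  · by_cases h : x = f₁ (f₂ y) <;> simp [h, Function.comp, mul_comm]
  · intro b _ hb; simp [hb]
  · simp

def cL (N : ℕ) (y : QState N) : ℂ :=
  ∏ p ∈ Finset.range (N - 1), if bitAt y p = 1 ∧ bitAt y (p + 1) = 1 then (-1 : ℂ) else 1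

lemma ladder_eq (N : ℕ) : ladderCZ N = cf id (cL N) := by
  ext x y
  simp only [ladderCZ, cf, cL, Matrix.of_apply, id]
  by_cases h : x = y
  · subst h; rfl
  · simp [h]

lemma cL_sq (y : QState N) : cL N y * cL N y = 1 := by
  rw [cL, ← Finset.prod_mul_distrib]
  apply Finset.prod_eq_one
  intro p _
  split <;> norm_num

lemma bitAt_lt (y : QState N) (q : ℕ) (h : q < N) : bitAt y q = y ⟨q, h⟩ := by
  simp [bitAt, h]

lemma bitAt_ge (y : QState N) (q : ℕ) (h : ¬ q < N) : bitAt y q = 0 := by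
  simp [bitAt, h]

lemma bitAt_update (y : QState N) (j : ℕ) (hj : j < N) (b : ZMod 2) (q : ℕ) :
    bitAt (Function.update y ⟨j, hj⟩ b) q = if q = j then b else bitAt y q := by
  rcases lt_or_ge q N with h | h
  · rw [bitAt_lt _ _ h, bitAt]
    by_cases hq : q = j
    · subst hq
      simp [Function.update_apply]
    · rw [Function.update_apply, if_neg (by simp [Fin.ext_iff, hq]), if_neg hq]
      simp [h]
  · have hq : ¬ q = j := by omega
    rw [bitAt_ge _ _ (by omega), if_neg hq, bitAt_ge _ _ (by omega)]

/-! Gadget data -/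

def mj (j : ℕ) (y : QState N) : ZMod 2 :=
  (if j = 0 then 0 else bitAt y (j - 1)) + bitAt y (j + 1)

def Tj (j : ℕ) (hj : j < N) (y : QState N) : QState N :=
  Function.update y ⟨j, hj⟩ (y ⟨j, hj⟩ + mj j y)

def Cj (j : ℕ) (y : QState N) : ℂ :=
  ∏ p ∈ Finset.range (N - 1),
    if (p ≠ j ∧ p + 1 ≠ j) ∧ bitAt y p = 1 ∧ bitAt y (p + 1) = 1 then (-1 : ℂ) else 1

lemma zmod2_cases : ∀ t : ZMod 2, t = 0 ∨ t = 1 := by decide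

lemma zmod2_add_self (t : ZMod 2) : t + t = 0 := by
  rcases zmod2_cases t with h | h <;> rw [h] <;> decide

lemma Tj_apply_ne (j : ℕ) (hj : j < N) (y : QState N) (i : Fin N) (hi : i ≠ ⟨j, hj⟩) :
    Tj j hj y i = y i := by
  unfold Tj; rw [Function.update_apply, if_neg hi]

lemma Tj_apply_self (j : ℕ) (hj : j < N) (y : QState N) :
    Tj j hj y ⟨j, hj⟩ = y ⟨j, hj⟩ + mj j y := by
  unfold Tj; rw [Function.update_self]

lemma mj_Tj (j : ℕ) (hj : j < N) (y : QState N) : mj j (Tj j hj y) = mj j y := by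
  unfold mj Tj
  rw [bitAt_update, bitAt_update, if_neg (show ¬ j + 1 = j by omega)]
  by_cases h0 : j = 0
  · rw [if_pos h0, if_pos h0]
  · rw [if_neg h0, if_neg h0, if_neg (show ¬ j - 1 = j by omega)]

lemma Tj_invol (j : ℕ) (hj : j < N) (y : QState N) : Tj j hj (Tj j hj y) = y := by
  funext i
  by_cases hi : i = ⟨j, hj⟩
  · subst hi
    rw [Tj_apply_self, mj_Tj, Tj_apply_self, add_assoc, zmod2_add_self, add_zero]
  · rw [Tj_apply_ne _ _ _ _ hi, Tj_apply_ne _ _ _ _ hi]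

lemma Cj_Tj (j : ℕ) (hj : j < N) (y : QState N) : Cj j (Tj j hj y) = Cj j y := by
  unfold Cj Tj
  refine Finset.prod_congr rfl fun p _ => ?_
  rw [bitAt_update, bitAt_update]
  by_cases h1 : p = j
  · simp [h1]
  · by_cases h2 : p + 1 = j
    · simp [h2]
    · rw [if_neg h1, if_neg h2]

lemma Cj_sq (j : ℕ) (y : QState N) : Cj j y * Cj j y = 1 := by
  rw [Cj, ← Finset.prod_mul_distrib]
  apply Finset.prod_eq_one
  intro p _
  split <;> norm_num

lemma sign_combine (b l r : ZMod 2) :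
    (if l = 1 ∧ b = 1 then (-1 : ℂ) else 1) * (if b = 1 ∧ r = 1 then (-1 : ℂ) else 1) =
      if b = 1 ∧ l + r = 1 then (-1 : ℂ) else 1 := by
  rcases zmod2_cases b with hb | hb <;> rcases zmod2_cases l with h1 | h1 <;>
    rcases zmod2_cases r with h2 | h2 <;> subst hb <;> subst h1 <;> subst h2 <;>
    simp (config := { decide := true }) <;> norm_num

lemma cL_update (y : QState N) (j : ℕ) (hj : j < N) (b : ZMod 2) :
    cL N (Function.update y ⟨j, hj⟩ b) =
      Cj j y * (if b = 1 ∧ mj j y = 1 then (-1 : ℂ) else 1) := by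
  have hfac : ∀ p, (if bitAt (Function.update y ⟨j, hj⟩ b) p = 1 ∧
        bitAt (Function.update y ⟨j, hj⟩ b) (p + 1) = 1 then (-1 : ℂ) else 1) =
      ((if (p ≠ j ∧ p + 1 ≠ j) ∧ bitAt y p = 1 ∧ bitAt y (p + 1) = 1 then (-1 : ℂ) else 1) *
        (if p + 1 = j then (if bitAt y (j - 1) = 1 ∧ b = 1 then (-1 : ℂ) else 1) else 1)) *
        (if p = j then (if b = 1 ∧ bitAt y (j + 1) = 1 then (-1 : ℂ) else 1) else 1) := by
    intro p
    rw [bitAt_update, bitAt_update]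
    by_cases h1 : p = j
    · have h2 : ¬ (p + 1 = j) := by omega
      subst h1
      simp [h2]
    · by_cases h2 : p + 1 = j
      · have hp : p = j - 1 := by omega
        subst hp
        simp [h1, h2]
      · rw [if_neg h1, if_neg h2, if_neg h1, if_neg h2, mul_one, mul_one]
        simp [h1, h2]
  rw [cL, Finset.prod_congr rfl fun p _ => hfac p, Finset.prod_mul_distrib,
    Finset.prod_mul_distrib]
  rw [show (∏ p ∈ Finset.range (N - 1),
      if (p ≠ j ∧ p + 1 ≠ j) ∧ bitAt y p = 1 ∧ bitAt y (p + 1) = 1 then (-1 : ℂ) else 1) =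
      Cj j y from rfl]
  have hA1 : (∏ p ∈ Finset.range (N - 1),
      (if p + 1 = j then (if bitAt y (j - 1) = 1 ∧ b = 1 then (-1 : ℂ) else 1) else 1)) =
      if (if j = 0 then (0 : ZMod 2) else bitAt y (j - 1)) = 1 ∧ b = 1 then (-1 : ℂ) else 1 := by
    rcases Nat.eq_zero_or_pos j with h0 | h0
    · subst h0
      rw [Finset.prod_eq_one (fun p _ => if_neg (by omega)),
        if_pos (show (0:ℕ) = 0 from rfl),
        if_neg (fun h => absurd h.1 (by decide))]
    · have hj0 : ¬ j = 0 := by omega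
      rw [if_neg hj0]
      calc (∏ p ∈ Finset.range (N - 1),
          (if p + 1 = j then (if bitAt y (j - 1) = 1 ∧ b = 1 then (-1 : ℂ) else 1) else 1))
          = (∏ p ∈ Finset.range (N - 1),
            (if p = j - 1 then (if bitAt y (j - 1) = 1 ∧ b = 1 then (-1 : ℂ) else 1) else 1)) := by
            refine Finset.prod_congr rfl fun p _ => ?_
            congr 1
            apply propext; constructor <;> intro h <;> omega
        _ = _ := by
            rw [Finset.prod_ite_eq' (Finset.range (N - 1)) (j - 1)
              (fun _ => if bitAt y (j - 1) = 1 ∧ b = 1 then (-1 : ℂ) else 1),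
              if_pos (Finset.mem_range.mpr (by omega))]
  rw [hA1, Finset.prod_ite_eq' (Finset.range (N - 1)) j
    (fun _ => if b = 1 ∧ bitAt y (j + 1) = 1 then (-1 : ℂ) else 1)]
  by_cases hjr : j ∈ Finset.range (N - 1)
  · rw [if_pos hjr, mul_assoc]
    congr 1
    exact sign_combine b _ _
  · rw [if_neg hjr, mul_one]
    have hr0 : bitAt y (j + 1) = 0 := by
      refine bitAt_ge y _ ?_
      simp only [Finset.mem_range] at hjr
      omega
    have hrm : mj j y = (if j = 0 then (0 : ZMod 2) else bitAt y (j - 1)) := by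
      rw [mj, hr0, add_zero]
    rw [hrm]
    by_cases hb : b = 1 <;>
      by_cases hl : (if j = 0 then (0 : ZMod 2) else bitAt y (j - 1)) = 1 <;>
      simp [hb, hl]

/-! ### The key conjugation lemma -/

lemma sqrt2C : ((Real.sqrt 2 : ℝ) : ℂ) * ((Real.sqrt 2 : ℝ) : ℂ) = 2 := by
  rw [← Complex.ofReal_mul, Real.mul_self_sqrt (by norm_num : (0:ℝ) ≤ 2)]
  norm_num

lemma sqrt2C_ne : ((Real.sqrt 2 : ℝ) : ℂ) ≠ 0 := by
  simp only [ne_eq, Complex.ofReal_eq_zero]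
  exact ne_of_gt (Real.sqrt_pos.mpr (by norm_num))

lemma hm_sum (a c m : ZMod 2) :
    HM a 0 * ((if (0 : ZMod 2) = 1 ∧ m = 1 then (-1 : ℂ) else 1) * HM 0 c)
      + HM a 1 * ((if (1 : ZMod 2) = 1 ∧ m = 1 then (-1 : ℂ) else 1) * HM 1 c)
      = if a = c + m then 1 else 0 := by
  have hs := sqrt2C
  have hs0 := sqrt2C_ne
  rcases zmod2_cases a with ha | ha <;> rcases zmod2_cases c with hc | hc <;>
    rcases zmod2_cases m with hm | hm <;> subst ha <;> subst hc <;> subst hm <;>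
    simp (config := { decide := true }) only [HM, Matrix.of_apply] <;>
    field_simp <;> rw [show ((Real.sqrt 2 : ℝ) : ℂ) ^ 2 = 2 by rw [sq, hs]] <;> norm_num

lemma cf_congr {f g : QState N → QState N} {c d : QState N → ℂ}
    (hf : f = g) (hc : c = d) : (cf f c : QOp N) = cf g d := by rw [hf, hc]

lemma cf_id_mul (c : QState N → ℂ) (A : QOp N) :
    cf id c * A = Matrix.of (fun x y => c x * A x y) := by
  ext x y
  simp only [Matrix.mul_apply, cf, Matrix.of_apply, id]
  rw [Finset.sum_eq_single x]
  · rw [if_pos rfl]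
  · intro b _ hb
    rw [if_neg (fun h => hb h.symm), zero_mul]
  · intro h; exact absurd (Finset.mem_univ x) h

lemma key (j : ℕ) (hj : j < N) :
    gate1 HM ⟨j, hj⟩ * ladderCZ N * gate1 HM ⟨j, hj⟩ = cf (Tj j hj) (Cj j) := by
  have hL : ladderCZ N * gate1 HM (⟨j, hj⟩ : Fin N) =
      Matrix.of (fun z y => cL N z * gate1 HM (⟨j, hj⟩ : Fin N) z y) := by
    rw [ladder_eq]; exact cf_id_mul _ _
  rw [Matrix.mul_assoc, hL]
  ext x y
  rw [Matrix.mul_apply]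
  simp only [Matrix.of_apply, cf]
  by_cases hxy : ∀ i, i ≠ (⟨j, hj⟩ : Fin N) → x i = y i
  · have hne : Function.update y (⟨j, hj⟩ : Fin N) (0 : ZMod 2) ≠
        Function.update y (⟨j, hj⟩ : Fin N) 1 := by
      intro h
      have h2 := congrFun h (⟨j, hj⟩ : Fin N)
      rw [Function.update_self, Function.update_self] at h2
      exact absurd h2 (by decide)
    have hupd : ∀ z : QState N, (∀ i, i ≠ (⟨j, hj⟩ : Fin N) → z i = y i) →
        z = Function.update y (⟨j, hj⟩ : Fin N) (z ⟨j, hj⟩) := by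
      intro z hz
      funext i
      by_cases hi : i = (⟨j, hj⟩ : Fin N)
      · subst hi; rw [Function.update_self]
      · rw [Function.update_apply, if_neg hi]; exact hz i hi
    have hz0 : ∀ z ∈ Finset.univ, z ≠ Function.update y (⟨j, hj⟩ : Fin N) (0 : ZMod 2) ∧
        z ≠ Function.update y (⟨j, hj⟩ : Fin N) 1 →
        gate1 HM (⟨j, hj⟩ : Fin N) x z * (cL N z * gate1 HM (⟨j, hj⟩ : Fin N) z y) = 0 := by
      intro z _ hz
      have hzero : gate1 HM (⟨j, hj⟩ : Fin N) z y = 0 := by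
        simp only [gate1, Matrix.of_apply]
        rw [if_neg]
        intro hz2
        have hzu := hupd z hz2
        rcases zmod2_cases (z ⟨j, hj⟩) with h0 | h0
        · rw [h0] at hzu; exact hz.1 hzu
        · rw [h0] at hzu; exact hz.2 hzu
      rw [hzero, mul_zero, mul_zero]
    rw [Finset.sum_eq_add (Function.update y (⟨j, hj⟩ : Fin N) (0 : ZMod 2))
      (Function.update y (⟨j, hj⟩ : Fin N) 1) hne hz0
      (fun h => absurd (Finset.mem_univ _) h) (fun h => absurd (Finset.mem_univ _) h)]
    have hg1 : ∀ b : ZMod 2,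
        gate1 HM (⟨j, hj⟩ : Fin N) x (Function.update y (⟨j, hj⟩ : Fin N) b)
          = HM (x ⟨j, hj⟩) b := by
      intro b
      have hcond : ∀ i, i ≠ (⟨j, hj⟩ : Fin N) → x i = Function.update y (⟨j, hj⟩ : Fin N) b i := by
        intro i hi
        rw [Function.update_apply, if_neg hi]
        exact hxy i hi
      simp only [gate1, Matrix.of_apply, if_pos hcond, Function.update_self]
    have hg2 : ∀ b : ZMod 2,
        gate1 HM (⟨j, hj⟩ : Fin N) (Function.update y (⟨j, hj⟩ : Fin N) b) y
          = HM b (y ⟨j, hj⟩) := by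
      intro b
      have hcond : ∀ i, i ≠ (⟨j, hj⟩ : Fin N) → Function.update y (⟨j, hj⟩ : Fin N) b i = y i :=
        fun i hi => by rw [Function.update_apply, if_neg hi]
      simp only [gate1, Matrix.of_apply, if_pos hcond, Function.update_self]
    rw [hg1, hg1, hg2, hg2, cL_update y j hj, cL_update y j hj]
    have hiff : x = Tj j hj y ↔ x ⟨j, hj⟩ = y ⟨j, hj⟩ + mj j y := by
      constructor
      · intro h; rw [h, Tj_apply_self]
      · intro h
        funext i
        by_cases hi : i = (⟨j, hj⟩ : Fin N)
        · subst hi; rw [Tj_apply_self]; exact h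
        · rw [Tj_apply_ne _ _ _ _ hi]; exact hxy i hi
    have hmain : HM (x ⟨j, hj⟩) 0 * (Cj j y * (if (0:ZMod 2) = 1 ∧ mj j y = 1 then (-1:ℂ) else 1)
          * HM 0 (y ⟨j, hj⟩))
        + HM (x ⟨j, hj⟩) 1 * (Cj j y * (if (1:ZMod 2) = 1 ∧ mj j y = 1 then (-1:ℂ) else 1)
          * HM 1 (y ⟨j, hj⟩))
        = Cj j y * (if x ⟨j, hj⟩ = y ⟨j, hj⟩ + mj j y then 1 else 0) := by
      rw [show ∀ A B C D E F G : ℂ, A * (G * B * C) + D * (G * E * F)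
          = G * (A * (B * C) + D * (E * F)) from fun _ _ _ _ _ _ _ => by ring]
      rw [hm_sum (x ⟨j, hj⟩) (y ⟨j, hj⟩) (mj j y)]
    rw [hmain]
    by_cases h : x ⟨j, hj⟩ = y ⟨j, hj⟩ + mj j y
    · rw [if_pos h, mul_one, if_pos (hiff.mpr h)]
    · rw [if_neg h, mul_zero, if_neg (fun hh => h (hiff.mp hh))]
  · have hsum : (∑ z : QState N,
        gate1 HM (⟨j, hj⟩ : Fin N) x z * (cL N z * gate1 HM (⟨j, hj⟩ : Fin N) z y)) = 0 := by
      apply Finset.sum_eq_zero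
      intro z _
      by_cases h1 : ∀ i, i ≠ (⟨j, hj⟩ : Fin N) → x i = z i
      · by_cases h2 : ∀ i, i ≠ (⟨j, hj⟩ : Fin N) → z i = y i
        · exact absurd (fun i hi => (h1 i hi).trans (h2 i hi)) hxy
        · have hz : gate1 HM (⟨j, hj⟩ : Fin N) z y = 0 := by
            simp only [gate1, Matrix.of_apply]; rw [if_neg h2]
          rw [hz, mul_zero, mul_zero]
      · have hz : gate1 HM (⟨j, hj⟩ : Fin N) x z = 0 := by
          simp only [gate1, Matrix.of_apply]; rw [if_neg h1]
        rw [hz, zero_mul]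
    rw [hsum, if_neg, eq_comm]
    intro h
    apply hxy
    intro i hi
    rw [h, Tj_apply_ne _ _ _ _ hi]

lemma L_cf_L (c : QState N → ℂ) :
    ladderCZ N * cf id c * ladderCZ N = cf id c := by
  rw [ladder_eq, cf_mul, cf_mul]
  refine cf_congr rfl (funext fun y => ?_)
  simp only [Function.comp_apply, id_eq]
  rw [mul_comm (c y) (cL N y), ← mul_assoc, cL_sq, one_mul]

lemma G_conj (j : ℕ) (hj : j < N) (c : QState N → ℂ) :
    cf (Tj j hj) (Cj j) * cf id c * cf (Tj j hj) (Cj j) =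
      cf id (fun y => c (Tj j hj y)) := by
  rw [cf_mul, cf_mul]
  refine cf_congr (funext fun y => ?_) (funext fun y => ?_)
  · exact Tj_invol j hj y
  · simp only [Function.comp_apply, id_eq]
    rw [Cj_Tj, mul_comm (c (Tj j hj y)) (Cj j y), ← mul_assoc, Cj_sq, one_mul]

/-! ### 2x2 gate identities and rotation-slot lemmas -/

def zv (θ : ℝ) (a : ZMod 2) : ℂ :=
  if a = 0 then Complex.exp (-(θ/2 : ℝ) * Complex.I) else Complex.exp ((θ/2 : ℝ) * Complex.I)

lemma zmod2_sum (f : ZMod 2 → ℂ) : ∑ z : ZMod 2, f z = f 0 + f 1 := by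
  have h : (Finset.univ : Finset (ZMod 2)) = {0, 1} := by decide
  rw [h, Finset.sum_insert (by decide), Finset.sum_singleton]

lemma expI (r : ℝ) : Complex.exp ((r : ℂ) * Complex.I)
    = ↑(Real.cos r) + ↑(Real.sin r) * Complex.I := by
  rw [Complex.exp_mul_I, Complex.ofReal_cos, Complex.ofReal_sin]

lemma RzM_apply (θ : ℝ) (a b : ZMod 2) : RzM θ a b = if a = b then zv θ a else 0 := rfl

lemma Rz_mul_apply (θ : ℝ) (A : Matrix (ZMod 2) (ZMod 2) ℂ) (a b : ZMod 2) :
    (RzM θ * A) a b = zv θ a * A a b := by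
  rw [Matrix.mul_apply, zmod2_sum]
  rcases zmod2_cases a with ha | ha <;> subst ha <;>
    simp (config := { decide := true }) [RzM_apply]

lemma Ry_zero : RyM 0 = 1 := by
  ext a b
  rcases zmod2_cases a with ha | ha <;> rcases zmod2_cases b with hb | hb <;>
    subst ha <;> subst hb <;>
    simp (config := { decide := true }) [RyM, Matrix.one_apply]

lemma Rz_zero : RzM 0 = 1 := by
  ext a b
  rcases zmod2_cases a with ha | ha <;> rcases zmod2_cases b with hb | hb <;>
    subst ha <;> subst hb <;>
    simp (config := { decide := true }) [RzM, Matrix.one_apply]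

lemma rot_id : RzM 0 * RyM 0 = 1 := by rw [Rz_zero, Ry_zero, one_mul]

lemma exp_neg_pi_half : Complex.exp (-(Real.pi/2 : ℝ) * Complex.I) = -Complex.I := by
  have h : (-(Real.pi/2 : ℝ) : ℂ) * Complex.I = ((-(Real.pi/2) : ℝ) : ℂ) * Complex.I := by
    push_cast; ring
  rw [h, expI]; simp

lemma exp_pos_pi_half : Complex.exp ((Real.pi/2 : ℝ) * Complex.I) = Complex.I := by
  rw [expI]; simp

lemma zv_pi : zv Real.pi = fun a => if a = 0 then -Complex.I else Complex.I := by
  funext a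
  rw [zv, exp_neg_pi_half, exp_pos_pi_half]

lemma gH : RzM Real.pi * RyM (-(Real.pi / 2)) = (-Complex.I) • HM := by
  have c4 : Real.cos (-(Real.pi / 2) / 2) = Real.sqrt 2 / 2 := by
    rw [show -(Real.pi / 2) / 2 = -(Real.pi / 4) by ring, Real.cos_neg, Real.cos_pi_div_four]
  have s4 : Real.sin (-(Real.pi / 2) / 2) = -(Real.sqrt 2 / 2) := by
    rw [show -(Real.pi / 2) / 2 = -(Real.pi / 4) by ring, Real.sin_neg, Real.sin_pi_div_four]
  have h2 := sqrt2C
  have h0 := sqrt2C_ne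
  ext a b
  rw [Rz_mul_apply, zv_pi]
  rcases zmod2_cases a with ha | ha <;> rcases zmod2_cases b with hb | hb <;>
    subst ha <;> subst hb <;>
    simp (config := { decide := true }) only [RyM, HM, Matrix.of_apply, Matrix.smul_apply,
      smul_eq_mul, c4, s4, if_true, if_false] <;>
    push_cast <;> field_simp <;> rw [show ((Real.sqrt 2 : ℝ) : ℂ) ^ 2 = 2 by rw [sq, h2]]

lemma Rz_add (a b : ℝ) : RzM (a + b) = RzM a * RzM b := by
  ext p q
  rw [Rz_mul_apply, RzM_apply, RzM_apply]
  by_cases h : p = q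
  · subst h
    rw [if_pos rfl, if_pos rfl]
    rcases zmod2_cases p with hp | hp <;> subst hp <;>
      simp (config := { decide := true }) only [zv, if_true, if_false] <;>
      rw [← Complex.exp_add] <;> push_cast <;> ring_nf
  · rw [if_neg h, if_neg h, mul_zero]

lemma gTop (θ : ℝ) : RzM (θ + Real.pi) * RyM (-(Real.pi / 2))
    = (-Complex.I) • (RzM θ * HM) := by
  rw [Rz_add, Matrix.mul_assoc, gH, Matrix.mul_smul]

lemma rot_apply (α β : Fin N → ℝ) (x y : QState N) :
    rotYZ α β x y = ∏ k, (RzM (β k) * RyM (α k)) (x k) (y k) := rfl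

lemma slotH (q : Fin N) (α β : Fin N → ℝ) (h1 : α q = -(Real.pi/2)) (h2 : β q = Real.pi)
    (ho : ∀ k, k ≠ q → α k = 0 ∧ β k = 0) :
    rotYZ α β = (-Complex.I) • gate1 HM q := by
  ext x y
  have hf : ∀ k, (RzM (β k) * RyM (α k)) (x k) (y k)
      = (if k = q then (-Complex.I) * HM (x k) (y k) else if x k = y k then 1 else 0) := by
    intro k
    by_cases hk : k = q
    · subst hk
      rw [h1, h2, gH, Matrix.smul_apply, smul_eq_mul, if_pos rfl]
    · rw [(ho k hk).1, (ho k hk).2, rot_id, Matrix.one_apply, if_neg hk]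
  rw [rot_apply, Finset.prod_congr rfl fun k _ => hf k,
    ← Finset.mul_prod_erase Finset.univ _ (Finset.mem_univ q), if_pos rfl,
    Finset.prod_congr rfl (fun k hk => if_neg (Finset.ne_of_mem_erase hk)),
    Finset.prod_boole, Matrix.smul_apply, smul_eq_mul]
  simp only [gate1, Matrix.of_apply]
  by_cases hcond : ∀ i, i ≠ q → x i = y i
  · rw [if_pos (fun k hk => hcond k (Finset.ne_of_mem_erase hk)), if_pos hcond, mul_one]
  · have hc2 : ¬ ∀ k ∈ Finset.univ.erase q, x k = y k := by
      intro hc; exact hcond fun i hi => hc i (Finset.mem_erase.mpr ⟨hi, Finset.mem_univ i⟩)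
    rw [if_neg hc2, if_neg hcond, mul_zero, mul_zero]

lemma slotD (q : Fin N) (θ : ℝ) (α β : Fin N → ℝ) (h1 : α q = 0) (h2 : β q = θ)
    (ho : ∀ k, k ≠ q → α k = 0 ∧ β k = 0) :
    rotYZ α β = cf id (fun y => zv θ (y q)) := by
  ext x y
  have hf : ∀ k, (RzM (β k) * RyM (α k)) (x k) (y k)
      = (if k = q then (if x k = y k then zv θ (x k) else 0)
         else if x k = y k then 1 else 0) := by
    intro k
    by_cases hk : k = q
    · subst hk
      rw [h1, h2, Ry_zero, Matrix.mul_one, RzM_apply, if_pos rfl]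
    · rw [(ho k hk).1, (ho k hk).2, rot_id, Matrix.one_apply, if_neg hk]
  rw [rot_apply, Finset.prod_congr rfl fun k _ => hf k,
    ← Finset.mul_prod_erase Finset.univ _ (Finset.mem_univ q), if_pos rfl,
    Finset.prod_congr rfl (fun k hk => if_neg (Finset.ne_of_mem_erase hk)),
    Finset.prod_boole]
  simp only [cf, Matrix.of_apply, id_eq]
  by_cases hxy : x = y
  · subst hxy
    rw [if_pos rfl, if_pos rfl, if_pos (fun k _ => rfl), mul_one]
  · rw [if_neg hxy]
    rcases Function.ne_iff.mp hxy with ⟨i, hi⟩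
    by_cases hiq : i = q
    · subst hiq; rw [if_neg hi, zero_mul]
    · rw [if_neg (show ¬ ∀ k ∈ Finset.univ.erase q, x k = y k from
        fun hc => hi (hc i (Finset.mem_erase.mpr ⟨hiq, Finset.mem_univ i⟩))), mul_zero]

lemma slotTop (q q' : Fin N) (hqq : q' ≠ q) (θ θ' : ℝ) (α β : Fin N → ℝ)
    (h1 : α q = -(Real.pi/2)) (h2 : β q = θ + Real.pi)
    (h3 : α q' = 0) (h4 : β q' = θ')
    (ho : ∀ k, k ≠ q → k ≠ q' → α k = 0 ∧ β k = 0) :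
    rotYZ α β = (-Complex.I) • (cf id (fun y => zv θ (y q) * zv θ' (y q')) * gate1 HM q) := by
  ext x y
  have hf : ∀ k, (RzM (β k) * RyM (α k)) (x k) (y k)
      = (if k = q then (-Complex.I) * (zv θ (x k) * HM (x k) (y k))
         else if k = q' then (if x k = y k then zv θ' (x k) else 0)
         else if x k = y k then 1 else 0) := by
    intro k
    by_cases hk : k = q
    · subst hk
      rw [h1, h2, gTop, Matrix.smul_apply, smul_eq_mul, Rz_mul_apply, if_pos rfl]
    · by_cases hk' : k = q'
      · subst hk'
        rw [h3, h4, Ry_zero, Matrix.mul_one, RzM_apply, if_neg hk, if_pos rfl]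
      · rw [(ho k hk hk').1, (ho k hk hk').2, rot_id, Matrix.one_apply, if_neg hk, if_neg hk']
  have hq'mem : q' ∈ Finset.univ.erase q := Finset.mem_erase.mpr ⟨hqq, Finset.mem_univ q'⟩
  rw [rot_apply, Finset.prod_congr rfl fun k _ => hf k,
    ← Finset.mul_prod_erase Finset.univ _ (Finset.mem_univ q), if_pos rfl,
    ← Finset.mul_prod_erase _ _ hq'mem, if_neg hqq, if_pos rfl,
    Finset.prod_congr rfl (fun k hk => by
      rw [if_neg (Finset.ne_of_mem_erase (Finset.mem_of_mem_erase hk)),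
        if_neg (Finset.ne_of_mem_erase hk)]),
    Finset.prod_boole, Matrix.smul_apply, smul_eq_mul,
    cf_id_mul, Matrix.of_apply]
  · simp only [gate1, Matrix.of_apply]
    by_cases hcond : ∀ i, i ≠ q → x i = y i
    · rw [if_pos hcond, if_pos (hcond q' hqq),
        if_pos (fun k hk => hcond k (Finset.ne_of_mem_erase (Finset.mem_of_mem_erase hk)))]
      ring
    · push_neg at hcond
      rcases hcond with ⟨i, hiq, hne⟩
      rw [if_neg (show ¬ ∀ i, i ≠ q → x i = y i from by push_neg; exact ⟨i, hiq, hne⟩)]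
      by_cases hiq' : i = q'
      · subst hiq'
        rw [if_neg hne]
        ring
      · rw [if_neg (show ¬ ∀ k ∈ (Finset.univ.erase q).erase q', x k = y k from
          fun hc => hne (hc i (Finset.mem_erase.mpr ⟨hiq',
            Finset.mem_erase.mpr ⟨hiq, Finset.mem_univ i⟩⟩)))]
        ring


/-! ### Angle schedules and circuit assembly -/

def dd (k i : ℕ) : ℕ := if i ≤ 2*k then 2*k - i else i - 2*k
def qq (k i : ℕ) : ℕ := (dd k i - 1) / 2

def alph (N k : ℕ) : ℕ → Fin N → ℝ := fun i f =>
  if i = 2*k then 0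
  else if (f : ℕ) = qq k i then -(Real.pi/2) else 0

def beth (N k : ℕ) : ℕ → Fin N → ℝ := fun i f =>
  if i = 2*k then (if (f : ℕ) = 0 then -(Real.pi/2) else 0)
  else if i = 4*k then
    (if (f : ℕ) = k - 1 then Real.pi/2 + Real.pi
     else if (f : ℕ) = k then Real.pi/2 else 0)
  else (if (f : ℕ) = qq k i then Real.pi else 0)

lemma slot_is_H (N k i : ℕ) (v : ℕ) (hvN : v < N) (h2k : i ≠ 2*k) (h4k : i ≠ 4*k)
    (hv : qq k i = v) :
    rotYZ (alph N k i) (beth N k i) = (-Complex.I) • gate1 HM ⟨v, hvN⟩ := by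
  apply slotH
  · show alph N k i ⟨v, hvN⟩ = _
    unfold alph
    rw [if_neg h2k, if_pos (show ((⟨v, hvN⟩ : Fin N) : ℕ) = qq k i from by rw [hv])]
  · show beth N k i ⟨v, hvN⟩ = _
    unfold beth
    rw [if_neg h2k, if_neg h4k, if_pos (show ((⟨v, hvN⟩ : Fin N) : ℕ) = qq k i from by rw [hv])]
  · intro f hf
    have hfv : ¬((f : ℕ) = qq k i) := fun h => hf (Fin.ext (by rw [h, hv]))
    constructor
    · show alph N k i f = 0
      unfold alph; rw [if_neg h2k, if_neg hfv]
    · show beth N k i f = 0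
      unfold beth; rw [if_neg h2k, if_neg h4k, if_neg hfv]

lemma slot_is_D (N k : ℕ) (h0 : 0 < N) :
    rotYZ (alph N k (2*k)) (beth N k (2*k))
      = cf id (fun y => zv (-(Real.pi/2)) (y ⟨0, h0⟩)) := by
  apply slotD
  · show alph N k (2*k) ⟨0, h0⟩ = 0
    unfold alph; rw [if_pos rfl]
  · show beth N k (2*k) ⟨0, h0⟩ = -(Real.pi/2)
    unfold beth; rw [if_pos rfl, if_pos rfl]
  · intro f hf
    have hfv : ¬((f : ℕ) = 0) := fun h => hf (Fin.ext h)
    constructor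
    · show alph N k (2*k) f = 0
      unfold alph; rw [if_pos rfl]
    · show beth N k (2*k) f = 0
      unfold beth; rw [if_pos rfl, if_neg hfv]

lemma slot_is_Top (N k : ℕ) (hk1 : 1 ≤ k) (hkN : k < N) (v : ℕ) (hveq : v = k - 1)
    (hvN : v < N) :
    rotYZ (alph N k (4*k)) (beth N k (4*k)) =
      (-Complex.I) • (cf id (fun y => zv (Real.pi/2) (y ⟨v, hvN⟩)
        * zv (Real.pi/2) (y ⟨k, hkN⟩)) * gate1 HM ⟨v, hvN⟩) := by
  have hq : qq k (4*k) = k - 1 := by unfold qq dd; split <;> omega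
  have hvval : ((⟨v, hvN⟩ : Fin N) : ℕ) = v := rfl
  have hkval : ((⟨k, hkN⟩ : Fin N) : ℕ) = k := rfl
  apply slotTop _ _ (show (⟨k, hkN⟩ : Fin N) ≠ ⟨v, hvN⟩ from
    Fin.ne_of_val_ne (by rw [hvval, hkval]; omega))
  · show alph N k (4*k) ⟨v, hvN⟩ = _
    unfold alph
    rw [if_neg (by omega), hvval, hq, if_pos (by omega)]
  · show beth N k (4*k) ⟨v, hvN⟩ = _
    unfold beth
    rw [if_neg (by omega), if_pos rfl, hvval, if_pos (by omega)]
  · show alph N k (4*k) ⟨k, hkN⟩ = 0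
    unfold alph
    rw [if_neg (by omega), hkval, hq, if_neg (by omega)]
  · show beth N k (4*k) ⟨k, hkN⟩ = _
    unfold beth
    rw [if_neg (by omega), if_pos rfl, hkval, if_neg (by omega), if_pos rfl]
  · intro f hf hf'
    have h2 : ¬((f : ℕ) = k - 1) := by
      intro h; exact hf (Fin.ext (by rw [hvval, h]; omega))
    have h1 : ¬((f : ℕ) = qq k (4*k)) := by rw [hq]; exact h2
    have h3 : ¬((f : ℕ) = k) := fun h => hf' (Fin.ext (by rw [hkval, h]))
    constructor
    · show alph N k (4*k) f = 0
      unfold alph; rw [if_neg (by omega), if_neg h1]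
    · show beth N k (4*k) f = 0
      unfold beth; rw [if_neg (by omega), if_pos rfl, if_neg h2, if_neg h3]

def EE (N k : ℕ) (hN : 2 ≤ N) (hk2 : k ≤ N - 1) : ℕ → QOp N
  | 0 => 1
  | (t+1) => ladderCZ N *
      (gate1 HM ⟨k-1-t, by omega⟩ * ladderCZ N * gate1 HM ⟨k-1-t, by omega⟩) *
      EE N k hN hk2 t

lemma ansatz_unfold (N : ℕ) (α β : ℕ → Fin N → ℝ) (m M : ℕ) (h : M = m + 1) :
    ansatzYZ N α β M = rotYZ (α M) (β M) * ladderCZ N * ansatzYZ N α β m := by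
  subst h; rfl

def ccf (N : ℕ) (j : ℕ) (hj1 : j + 1 < N) : QState N → ℂ :=
  fun y => zv (-(Real.pi/2)) (y ⟨j, by omega⟩ + y ⟨j+1, hj1⟩)

lemma Tj_congr (v w : ℕ) (h : v = w) (hv : v < N) (hw : w < N) (y : QState N) :
    Tj v hv y = Tj w hw y := by subst h; rfl

lemma ccf_congr (N a b : ℕ) (h : a = b) (ha : a + 1 < N) (hb : b + 1 < N) :
    ccf N a ha = ccf N b hb := by subst h; rfl

lemma ccf_base (N : ℕ) (h1 : 1 < N) (h0 : 0 < N) (h0' : 0 < N) (y : QState N) :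
    zv (-(Real.pi/2)) (Tj 0 h0 y ⟨0, h0'⟩) = ccf N 0 h1 y := by
  have : (⟨0, h0'⟩ : Fin N) = ⟨0, h0⟩ := rfl
  rw [this, Tj_apply_self]
  unfold ccf
  congr 1
  unfold mj
  rw [if_pos rfl, zero_add, bitAt_lt y 1 h1]

lemma ccf_step (N j : ℕ) (hj2 : j + 2 < N) (hj1 : j + 1 < N) (hj1' : j + 1 < N)
    (y : QState N) :
    ccf N j (by omega) (Tj (j+1) hj1' y) = ccf N (j+1) (by omega : j + 1 + 1 < N) y := by
  unfold ccf
  rw [Tj_apply_ne _ _ _ _ (Fin.ne_of_val_ne (by show j ≠ j + 1; omega)),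
    show (⟨j+1, by omega⟩ : Fin N) = ⟨j+1, hj1'⟩ from rfl, Tj_apply_self]
  congr 1
  unfold mj
  rw [if_neg (by omega), show j + 1 - 1 = j from rfl, bitAt_lt y j (by omega),
    bitAt_lt y (j+1+1) (by omega)]
  have hz : ∀ a b c : ZMod 2, a + (b + (a + c)) = b + c := by decide
  exact hz _ _ _

lemma sandwichW (v : ℕ) (hv : v < N) (c : QState N → ℂ) (W : QOp N) :
    gate1 HM ⟨v, hv⟩ * (ladderCZ N * (gate1 HM ⟨v, hv⟩ * (ladderCZ N * (cf id c *
      (ladderCZ N * (gate1 HM ⟨v, hv⟩ * (ladderCZ N * (gate1 HM ⟨v, hv⟩ * W))))))))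
      = cf id (fun y => c (Tj v hv y)) * W := by
  calc gate1 HM ⟨v, hv⟩ * (ladderCZ N * (gate1 HM ⟨v, hv⟩ * (ladderCZ N * (cf id c *
      (ladderCZ N * (gate1 HM ⟨v, hv⟩ * (ladderCZ N * (gate1 HM ⟨v, hv⟩ * W))))))))
      = ((gate1 HM ⟨v, hv⟩ * ladderCZ N * gate1 HM ⟨v, hv⟩) *
          (ladderCZ N * cf id c * ladderCZ N) *
          (gate1 HM ⟨v, hv⟩ * ladderCZ N * gate1 HM ⟨v, hv⟩)) * W := by
        simp only [Matrix.mul_assoc]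
    _ = (cf (Tj v hv) (Cj v) * (ladderCZ N * cf id c * ladderCZ N) *
          cf (Tj v hv) (Cj v)) * W := by rw [key]
    _ = (cf (Tj v hv) (Cj v) * cf id c * cf (Tj v hv) (Cj v)) * W := by rw [L_cf_L]
    _ = cf id (fun y => c (Tj v hv y)) * W := by rw [G_conj]

lemma bottom (N k : ℕ) (hN : 2 ≤ N) (hk1 : 1 ≤ k) (hk2 : k ≤ N - 1) :
    ∀ t, t ≤ k - 1 → ∀ (v : ℕ) (hveq : v = k - 1 - t) (hvN : v < N),
      ansatzYZ N (alph N k) (beth N k) (2*t)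
        = ((-Complex.I)^(2*t+1)) • (gate1 HM ⟨v, hvN⟩ * EE N k hN hk2 t) := by
  intro t
  induction t with
  | zero =>
    intro _ v hveq hvN
    rw [show (2*0 : ℕ) = 0 from rfl,
      show ansatzYZ N (alph N k) (beth N k) 0 = rotYZ (alph N k 0) (beth N k 0) from rfl,
      slot_is_H N k 0 v hvN (by omega) (by omega)
        (by unfold qq dd; rw [if_pos (by omega)]; omega),
      show EE N k hN hk2 0 = 1 from rfl, Matrix.mul_one, pow_one]
  | succ t IH =>
    intro ht v hveq hvN
    rw [ansatz_unfold N _ _ (2*t+1) (2*(t+1)) (by omega),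
      ansatz_unfold N _ _ (2*t) (2*t+1) (by omega),
      IH (by omega) (k-1-t) rfl (by omega),
      slot_is_H N k (2*t+1) (k-1-t) (by omega) (by omega) (by omega)
        (by unfold qq dd; rw [if_pos (by omega)]; omega),
      slot_is_H N k (2*(t+1)) v hvN (by omega) (by omega)
        (by unfold qq dd; rw [if_pos (by omega)]; omega),
      show EE N k hN hk2 (t+1) = ladderCZ N *
        (gate1 HM ⟨k-1-t, by omega⟩ * ladderCZ N * gate1 HM ⟨k-1-t, by omega⟩) *
        EE N k hN hk2 t from rfl]
    simp only [Matrix.smul_mul, Matrix.mul_smul, smul_smul, Matrix.mul_assoc]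
    congr 1

/-! ### Top-half induction and finishing lemmas -/

lemma cf_smul (s : ℂ) (f : QState N → QState N) (c : QState N → ℂ) :
    s • cf f c = cf f (fun y => s * c y) := by
  ext x y
  simp only [cf, Matrix.smul_apply, Matrix.of_apply, smul_eq_mul]
  by_cases h : x = f y
  · rw [if_pos h, if_pos h]
  · rw [if_neg h, if_neg h, mul_zero]

lemma CZg_cf {N : ℕ} (a b : Fin N) :
    CZg a b = cf id (fun y => if y a = 1 ∧ y b = 1 then (-1 : ℂ) else 1) := by
  ext x y
  simp only [CZg, cf, Matrix.of_apply, id_eq]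
  by_cases h : x = y
  · subst h; rfl
  · rw [if_neg h, if_neg h]

lemma negI_pow_four : (-Complex.I)^(4 : ℕ) = 1 := by
  rw [show (4:ℕ) = 2*2 from rfl, pow_mul, neg_sq, Complex.I_sq, neg_one_sq]

lemma negI_pow_4k (k : ℕ) : (-Complex.I)^(4*k) = 1 := by
  rw [pow_mul, negI_pow_four, one_pow]

lemma final_val (a b : ZMod 2) :
    zv (-(Real.pi/2)) (a + b) * (zv (Real.pi/2) a * zv (Real.pi/2) b)
      = Complex.exp ((-(Real.pi/4) : ℝ) * Complex.I) * (if a = 1 ∧ b = 1 then (-1:ℂ) else 1) := by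
  rcases zmod2_cases a with ha | ha <;> rcases zmod2_cases b with hb | hb <;>
    subst ha <;> subst hb <;>
    simp (config := { decide := true }) only [zv, if_true, if_false] <;>
    rw [← Complex.exp_add, ← Complex.exp_add] <;>
    [skip; skip; skip;
      (rw [show Complex.exp ((-(Real.pi/4) : ℝ) * Complex.I) * (-1)
          = Complex.exp ((-(Real.pi/4) : ℝ) * Complex.I) * Complex.exp (↑Real.pi * Complex.I)
          from by rw [Complex.exp_pi_mul_I], ← Complex.exp_add])] <;>
    (try rw [mul_one]) <;> congr 1 <;> push_cast <;> ring

lemma mainP (N k : ℕ) (hN : 2 ≤ N) (hk1 : 2 ≤ k) (hk2 : k ≤ N - 1) :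
    ∀ j (hj : j ≤ k - 2) (u : ℕ) (hu : u = k - 1 - j),
      ansatzYZ N (alph N k) (beth N k) (2*k+2*j+2)
        = ((-Complex.I)^(2*k+2*j+2)) •
            (cf id (ccf N j (by omega)) * EE N k hN hk2 u) := by
  intro j
  induction j with
  | zero =>
    intro hj u hu
    rw [show u = k - 1 from by omega]
    rw [ansatz_unfold N _ _ (2*k+1) (2*k+2*0+2) (by omega),
      ansatz_unfold N _ _ (2*k) (2*k+1) (by omega),
      ansatz_unfold N _ _ (2*k-1) (2*k) (by omega),
      ansatz_unfold N _ _ (2*(k-1)) (2*k-1) (by omega),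
      bottom N k hN (by omega) hk2 (k-1) (by omega) 0 (by omega) (by omega),
      slot_is_H N k (2*k+2*0+2) 0 (by omega) (by omega) (by omega)
        (by unfold qq dd; rw [if_neg (by omega)]; omega),
      slot_is_H N k (2*k+1) 0 (by omega) (by omega) (by omega)
        (by unfold qq dd; rw [if_neg (by omega)]; omega),
      slot_is_H N k (2*k-1) 0 (by omega) (by omega) (by omega)
        (by unfold qq dd; rw [if_pos (by omega)]; omega),
      slot_is_D N k (by omega)]
    simp only [Matrix.smul_mul, Matrix.mul_smul, smul_smul, Matrix.mul_assoc]
    rw [sandwichW 0 (by omega) _ (EE N k hN hk2 (k-1))]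
    congr 1
    · rw [show 2*k+2*0+2 = (2*(k-1)+1) + 3 from by omega]
      ring
    · refine congrArg₂ HMul.hMul (cf_congr rfl (funext fun y => ?_)) rfl
      exact ccf_base N (by omega) (by omega) (by omega) y
  | succ j IH =>
    intro hj u hu
    rw [show u = k-2-j from by omega]
    rw [ansatz_unfold N _ _ (2*k+2*j+3) (2*k+2*(j+1)+2) (by omega),
      ansatz_unfold N _ _ (2*k+2*j+2) (2*k+2*j+3) (by omega),
      IH (by omega) ((k-2-j)+1) (by omega),
      slot_is_H N k (2*k+2*(j+1)+2) (k-1-(k-2-j)) (by omega) (by omega) (by omega)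
        (by unfold qq dd; rw [if_neg (by omega)]; omega),
      slot_is_H N k (2*k+2*j+3) (k-1-(k-2-j)) (by omega) (by omega) (by omega)
        (by unfold qq dd; rw [if_neg (by omega)]; omega),
      show EE N k hN hk2 ((k-2-j)+1) = ladderCZ N *
        (gate1 HM ⟨k-1-(k-2-j), by omega⟩ * ladderCZ N * gate1 HM ⟨k-1-(k-2-j), by omega⟩) *
        EE N k hN hk2 (k-2-j) from rfl]
    simp only [Matrix.smul_mul, Matrix.mul_smul, smul_smul, Matrix.mul_assoc]
    rw [sandwichW (k-1-(k-2-j)) (by omega) _ (EE N k hN hk2 (k-2-j))]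
    congr 1
    · refine congrArg₂ HMul.hMul (cf_congr rfl (funext fun y => ?_)) rfl
      rw [Tj_congr (k-1-(k-2-j)) (j+1) (by omega) (by omega) (by omega) y,
        ccf_step N j (by omega) (by omega) (by omega) y]

end CZAux
end Aux

open CZAux

set_option maxHeartbeats 2000000

/-- for every `N ≥ 2` and `1 ≤ k ≤ N−1` (1-based qubit `q` ↦ index `q−1`),
there are a depth `M ≤ 32·N + 18`, angles, and a real phase `φ` such that the `N`-qubit
depth-`M` Ry-Rz-CZ ansatz equals `e^{iφ}·CZ_{k,k+1}`. -/
theorem nearest_neighbor_CZ_in_ansatzYZ (N : ℕ) (hN : 2 ≤ N) (k : ℕ)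
    (hk1 : 1 ≤ k) (hk2 : k ≤ N - 1) :
    ∃ M : ℕ, M ≤ 32 * N + 18 ∧
      ∃ (α β : ℕ → Fin N → ℝ) (φ : ℝ),
        ansatzYZ N α β M =
          Complex.exp (φ * Complex.I) • CZg (⟨k - 1, by omega⟩ : Fin N) ⟨k, by omega⟩ := by
  have hkN : k < N := by omega
  refine ⟨4*k, by omega, alph N k, beth N k, -(Real.pi/4), ?_⟩
  have hA : ansatzYZ N (alph N k) (beth N k) (4*k)
      = ((-Complex.I)^(4*k)) •
        (cf id (fun y => zv (Real.pi/2) (y ⟨k-1-0, by omega⟩)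
            * zv (Real.pi/2) (y ⟨k, hkN⟩)) *
          (cf id (ccf N (k-1) (by omega)) * EE N k hN hk2 0)) := by
    rcases Nat.lt_or_ge k 2 with hk | hk
    · -- k = 1
      rw [ansatz_unfold N _ _ (2*k+1) (4*k) (by omega),
        ansatz_unfold N _ _ (2*k) (2*k+1) (by omega),
        ansatz_unfold N _ _ (2*k-1) (2*k) (by omega),
        ansatz_unfold N _ _ (2*(k-1)) (2*k-1) (by omega),
        bottom N k hN hk1 hk2 (k-1) (le_refl _) (k-1-0) (by omega) (by omega),
        slot_is_H N k (2*k+1) (k-1-0) (by omega) (by omega) (by omega)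
          (by unfold qq dd; rw [if_neg (by omega)]; omega),
        slot_is_H N k (2*k-1) (k-1-0) (by omega) (by omega) (by omega)
          (by unfold qq dd; rw [if_pos (by omega)]; omega),
        slot_is_D N k (by omega),
        slot_is_Top N k hk1 hkN (k-1-0) (by omega) (by omega),
        show EE N k hN hk2 (k-1) = EE N k hN hk2 0 from by
          rw [show k-1 = 0 from by omega]]
      simp only [Matrix.smul_mul, Matrix.mul_smul, smul_smul, Matrix.mul_assoc]
      rw [sandwichW (k-1-0) (by omega) _ (EE N k hN hk2 0)]
      congr 1
      · rw [show 4*k = (2*(k-1)+1)+3 from by omega]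
        ring
      · refine congrArg₂ HMul.hMul rfl
          (congrArg₂ HMul.hMul (cf_congr rfl (funext fun y => ?_)) rfl)
        rw [Tj_congr (k-1-0) 0 (by omega) (by omega) (by omega) y,
          ccf_base N (by omega) (by omega) (by omega) y,
          ccf_congr N 0 (k-1) (by omega) (by omega) (by omega)]
    · -- k ≥ 2
      rw [ansatz_unfold N _ _ (4*k-1) (4*k) (by omega),
        ansatz_unfold N _ _ (2*k+2*(k-2)+2) (4*k-1) (by omega),
        mainP N k hN hk hk2 (k-2) (le_refl _) (0+1) (by omega),
        slot_is_H N k (4*k-1) (k-1-0) (by omega) (by omega) (by omega)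
          (by unfold qq dd; rw [if_neg (by omega)]; omega),
        slot_is_Top N k hk1 hkN (k-1-0) (by omega) (by omega),
        show EE N k hN hk2 (0+1) = ladderCZ N *
          (gate1 HM ⟨k-1-0, by omega⟩ * ladderCZ N * gate1 HM ⟨k-1-0, by omega⟩) *
          EE N k hN hk2 0 from rfl]
      simp only [Matrix.smul_mul, Matrix.mul_smul, smul_smul, Matrix.mul_assoc]
      rw [sandwichW (k-1-0) (by omega) _ (EE N k hN hk2 0)]
      congr 1
      · rw [show 4*k = (2*k+2*(k-2)+2)+2 from by omega]
        ring
      · refine congrArg₂ HMul.hMul rfl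
          (congrArg₂ HMul.hMul (cf_congr rfl (funext fun y => ?_)) rfl)
        rw [Tj_congr (k-1-0) ((k-2)+1) (by omega) (by omega) (by omega) y,
          ccf_step N (k-2) (by omega) (by omega) (by omega) y,
          ccf_congr N ((k-2)+1) (k-1) (by omega) (by omega) (by omega)]
  rw [hA, negI_pow_4k, one_smul, show EE N k hN hk2 0 = 1 from rfl, Matrix.mul_one,
    cf_mul, CZg_cf, cf_smul]
  refine cf_congr (Function.comp_id id) (funext fun y => ?_)
  simp only [ccf, id_eq]
  have ef : (⟨k-1+1, by omega⟩ : Fin N) = (⟨k, hkN⟩ : Fin N) := Fin.ext (by show k-1+1 = k; omega)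
  rw [ef]
  have ef2 : (⟨k, by omega⟩ : Fin N) = (⟨k, hkN⟩ : Fin N) := rfl
  have ef3 : (⟨k-1, by omega⟩ : Fin N) = (⟨k-1-0, by omega⟩ : Fin N) := rfl
  exact final_val (y ⟨k-1-0, by omega⟩) (y ⟨k, hkN⟩)
end

section
/- For every integer N ≥ 2 and all distinct k, l ∈ {1,…,N}, the gate CNOT_{k,l} (control k, target l) on N qubits equals a product of exactly 6·|k−l| − 5 nearest-neighbor CNOT gates, i.e., gates each of the form CNOT_{j,j+1} or CNOT_{j+1,j} for some j ∈ {1,…,N−1}. -/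
open Complex

noncomputable section

namespace NNCNOT

def Fm {N : ℕ} (c t : Fin N) (y : QState N) : QState N := Function.update y t (y t + y c)

def Pm {N : ℕ} (f : QState N → QState N) : QOp N :=
  Matrix.of fun x y => if x = f y then (1 : ℂ) else 0

lemma CNOTg_eq_Pm {N : ℕ} (c t : Fin N) : CNOTg c t = Pm (Fm c t) := rfl

lemma Pm_mul {N : ℕ} (f g : QState N → QState N) : Pm f * Pm g = Pm (f ∘ g) := by
  ext x y
  rw [Matrix.mul_apply, Finset.sum_eq_single (g y)]
  · simp [Pm]
  · intro z _ hz; simp [Pm, hz]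
  · simp

lemma swap3 {N : ℕ} (a b : Fin N) (hab : a ≠ b) :
    Fm a b ∘ Fm b a ∘ Fm a b = fun y => y ∘ (Equiv.swap a b) := by
  funext y i
  simp only [Fm, Function.comp_apply, Function.update_apply]
  by_cases hia : i = a <;> by_cases hib : i = b
  · exact absurd (hia ▸ hib) hab
  · simp [hia, hab, Ne.symm hab, Equiv.swap_apply_left]
    exact (by decide : ∀ u v : ZMod 2, u + (v + u) = v) _ _
  · simp [hib, hab, Ne.symm hab, Equiv.swap_apply_right]
    exact (by decide : ∀ u v : ZMod 2, v + u + (u + (v + u)) = u) _ _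
  · simp [hia, hib, Equiv.swap_apply_of_ne_of_ne hia hib]

lemma conj_fun {N : ℕ} (a b c t : Fin N) :
    (fun y : QState N => y ∘ (Equiv.swap a b)) ∘ Fm c t ∘ (fun y => y ∘ (Equiv.swap a b))
      = Fm (Equiv.swap a b c) (Equiv.swap a b t) := by
  funext y i
  set σ := Equiv.swap a b
  simp only [Fm, Function.comp_apply, Function.update_apply]
  have hσσ : ∀ j, σ (σ j) = j := fun j => Equiv.swap_apply_self a b j
  have hiff : σ i = t ↔ i = σ t := by
    constructor
    · intro h; rw [← h, hσσ]
    · intro h; rw [h, hσσ]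
  by_cases h : σ i = t
  · simp [h, hiff.mp h, hσσ]
  · have h' : ¬ i = σ t := fun hc => h (hiff.mpr hc)
    simp [h, h', hσσ]

lemma sandwich {N : ℕ} (a b c t : Fin N) (hab : a ≠ b) :
    (CNOTg a b * CNOTg b a * CNOTg a b) * CNOTg c t * (CNOTg a b * CNOTg b a * CNOTg a b)
      = CNOTg (Equiv.swap a b c) (Equiv.swap a b t) := by
  simp only [CNOTg_eq_Pm, Pm_mul]
  show Pm ((Fm a b ∘ Fm b a ∘ Fm a b) ∘ Fm c t ∘ (Fm a b ∘ Fm b a ∘ Fm a b)) = _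
  rw [swap3 a b hab, conj_fun]

end NNCNOT

namespace NNCNOT

theorem aux (N : ℕ) (d : ℕ) : ∀ c t : Fin N, Nat.dist (c : ℕ) (t : ℕ) = d + 1 →
    ∃ gs : List (QOp N),
      gs.length = 6 * (d + 1) - 5 ∧
      (∀ g ∈ gs, ∃ (j : ℕ) (h : j + 1 < N),
        g = CNOTg (⟨j, by omega⟩ : Fin N) ⟨j + 1, h⟩ ∨
        g = CNOTg (⟨j + 1, h⟩ : Fin N) ⟨j, by omega⟩) ∧
      gs.prod = CNOTg c t := by
  induction d with
  | zero =>
    intro c t hd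
    refine ⟨[CNOTg c t], rfl, ?_, by simp⟩
    intro g hg
    simp at hg
    subst hg
    simp [Nat.dist] at hd
    rcases Nat.lt_or_ge (c : ℕ) (t : ℕ) with hct | hct
    · have hb : (c : ℕ) + 1 < N := by have := t.2; omega
      have ht' : t = (⟨(c : ℕ) + 1, hb⟩ : Fin N) := Fin.ext (show _ = (c : ℕ) + 1 by omega)
      exact ⟨(c : ℕ), hb, Or.inl (congrArg (CNOTg c) ht')⟩
    · have hb : (t : ℕ) + 1 < N := by have := c.2; omega
      have hc2 : c = (⟨(t : ℕ) + 1, hb⟩ : Fin N) := Fin.ext (show _ = (t : ℕ) + 1 by omega)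
      exact ⟨(t : ℕ), hb, Or.inr (congrArg (fun z => CNOTg z t) hc2)⟩
  | succ d ih =>
    intro c t hd
    have hNd : Nat.dist (c : ℕ) (t : ℕ) = d + 2 := hd
    rcases Nat.lt_or_ge (c : ℕ) (t : ℕ) with hct | hct
    · -- c < t, move control up: c' = c + 1
      have hval : (t : ℕ) = (c : ℕ) + d + 2 := by simp [Nat.dist] at hNd; omega
      have hc1 : (c : ℕ) + 1 < N := by have := t.isLt; omega
      set c' : Fin N := ⟨(c : ℕ) + 1, hc1⟩ with hc'
      have hdist' : Nat.dist (c' : ℕ) (t : ℕ) = d + 1 := by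
        simp [Nat.dist, hc']; omega
      obtain ⟨gs', hlen, hmem, hprod⟩ := ih c' t hdist'
      have hne : c ≠ c' := fun h => by
        have := congrArg Fin.val h; simp [hc'] at this
      refine ⟨[CNOTg c c', CNOTg c' c, CNOTg c c'] ++ gs' ++
              [CNOTg c c', CNOTg c' c, CNOTg c c'], ?_, ?_, ?_⟩
      · simp [hlen]; omega
      · intro g hg
        have hg' : g = CNOTg c c' ∨ g = CNOTg c' c ∨ g ∈ gs' := by
          simp only [List.mem_append, List.mem_cons, List.not_mem_nil, or_false] at hg
          tauto
        rcases hg' with hg' | hg' | hg'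
        · exact ⟨(c : ℕ), hc1, Or.inl hg'⟩
        · exact ⟨(c : ℕ), hc1, Or.inr hg'⟩
        · exact hmem g hg'
      · rw [List.prod_append, List.prod_append, hprod]
        simp only [List.prod_cons, List.prod_nil, mul_one]
        have hsw := sandwich c c' c' t hne
        have hsc : Equiv.swap c c' c' = c := Equiv.swap_apply_right c c'
        have hst : Equiv.swap c c' t = t := by
          apply Equiv.swap_apply_of_ne_of_ne
          · exact fun h => by have := congrArg Fin.val h; omega
          · exact fun h => by have := congrArg Fin.val h; simp [hc'] at this; omega
        rw [hsc, hst] at hsw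
        simp only [mul_assoc] at hsw ⊢
        exact hsw
    · -- c > t, move control down: c' = c - 1
      have hval : (c : ℕ) = (t : ℕ) + d + 2 := by simp [Nat.dist] at hNd; omega
      have hc1 : (c : ℕ) - 1 + 1 < N := by have := c.isLt; omega
      set c' : Fin N := ⟨(c : ℕ) - 1, by omega⟩ with hc'
      have hdist' : Nat.dist (c' : ℕ) (t : ℕ) = d + 1 := by
        simp [Nat.dist, hc']; omega
      obtain ⟨gs', hlen, hmem, hprod⟩ := ih c' t hdist'
      have hne : c ≠ c' := fun h => by
        have := congrArg Fin.val h; simp [hc'] at this; omega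
      have hcfin : c = (⟨(c' : ℕ) + 1, by simp [hc']; omega⟩ : Fin N) := Fin.ext (by simp [hc']; omega)
      refine ⟨[CNOTg c c', CNOTg c' c, CNOTg c c'] ++ gs' ++
              [CNOTg c c', CNOTg c' c, CNOTg c c'], ?_, ?_, ?_⟩
      · simp [hlen]; omega
      · intro g hg
        have hg' : g = CNOTg c c' ∨ g = CNOTg c' c ∨ g ∈ gs' := by
          simp only [List.mem_append, List.mem_cons, List.not_mem_nil, or_false] at hg
          tauto
        rcases hg' with hg' | hg' | hg'
        · exact ⟨(c' : ℕ), by simp [hc']; omega,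
            Or.inr (hg'.trans (congrArg (fun z => CNOTg z c') hcfin))⟩
        · exact ⟨(c' : ℕ), by simp [hc']; omega,
            Or.inl (hg'.trans (congrArg (CNOTg c') hcfin))⟩
        · exact hmem g hg'
      · rw [List.prod_append, List.prod_append, hprod]
        simp only [List.prod_cons, List.prod_nil, mul_one]
        have hsw := sandwich c c' c' t hne
        have hsc : Equiv.swap c c' c' = c := Equiv.swap_apply_right c c'
        have hst : Equiv.swap c c' t = t := by
          apply Equiv.swap_apply_of_ne_of_ne
          · exact fun h => by have := congrArg Fin.val h; omega
          · exact fun h => by have := congrArg Fin.val h; simp [hc'] at this; omega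
        rw [hsc, hst] at hsw
        simp only [mul_assoc] at hsw ⊢
        exact hsw

end NNCNOT

end
/-- for every `N ≥ 2` and distinct 1-based qubits `k, l ∈ {1,…,N}`
(qubit `q` ↦ index `q−1`), `CNOT_{k,l}` equals a product of exactly `6·|k−l| − 5`
nearest-neighbor CNOT gates. -/
theorem CNOT_as_nearest_neighbor_CNOTs (N : ℕ) (hN : 2 ≤ N) (k l : ℕ)
    (hk1 : 1 ≤ k) (hk2 : k ≤ N) (hl1 : 1 ≤ l) (hl2 : l ≤ N) (hkl : k ≠ l) :
    ∃ gs : List (QOp N),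
      gs.length = 6 * Nat.dist k l - 5 ∧
      (∀ g ∈ gs, ∃ (j : ℕ) (h : j + 1 < N),
        g = CNOTg (⟨j, by omega⟩ : Fin N) ⟨j + 1, h⟩ ∨
        g = CNOTg (⟨j + 1, h⟩ : Fin N) ⟨j, by omega⟩) ∧
      gs.prod = CNOTg (⟨k - 1, by omega⟩ : Fin N) ⟨l - 1, by omega⟩ := by
  obtain ⟨d, hd⟩ : ∃ d, Nat.dist k l = d + 1 := by
    refine ⟨Nat.dist k l - 1, ?_⟩
    simp [Nat.dist] at *
    omega
  have hd' : Nat.dist (((⟨k - 1, by omega⟩ : Fin N)) : ℕ) (((⟨l - 1, by omega⟩ : Fin N)) : ℕ)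
      = d + 1 := by
    simp [Nat.dist] at hd ⊢
    omega
  obtain ⟨gs, h1, h2, h3⟩ := NNCNOT.aux N d _ _ hd'
  exact ⟨gs, by rw [hd]; exact h1, h2, h3⟩
end

section
/- For all integers N ≥ 1 and j with 1 ≤ j ≤ N, the binomial coefficient C(2^{⌈log₂(N+1)⌉} + ⌊j/2⌋, j) is even, where ⌈log₂(N+1)⌉ is the least integer m with N+1 ≤ 2^m and ⌊j/2⌋ is the floor of j/2. -/
open Complex

/-- for all `N ≥ 1` and `1 ≤ j ≤ N`, the binomial coefficient
`C(2^{⌈log₂(N+1)⌉} + ⌊j/2⌋, j)` is even. (`Nat.clog 2 (N+1)` is the least `m` with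
`N+1 ≤ 2^m`, and `j / 2` is natural-number floor division.) -/
theorem count_X_even (N j : ℕ) (hN : 1 ≤ N) (hj1 : 1 ≤ j) (hj2 : j ≤ N) :
    2 ∣ Nat.choose (2 ^ Nat.clog 2 (N + 1) + j / 2) j := by
  set m := Nat.clog 2 (N + 1) with hm
  set k := Nat.log 2 j with hk
  have hjm : j < 2 ^ m := lt_of_le_of_lt hj2 (lt_of_lt_of_le (Nat.lt_succ_self N)
    (Nat.le_pow_clog one_lt_two _))
  have hkj : 2 ^ k ≤ j := Nat.pow_log_le_self 2 (by omega)
  have hjk : j < 2 ^ (k + 1) := Nat.lt_pow_succ_log_self one_lt_two j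
  have hkm : k + 1 ≤ m := by
    by_contra h
    have : 2 ^ m ≤ 2 ^ k := Nat.pow_le_pow_right (by norm_num) (by omega)
    omega
  set a := 2 ^ m + j / 2 with ha
  have hja : j ≤ a := by omega
  have hloga : Nat.log 2 a < m + 1 := by
    apply Nat.log_lt_of_lt_pow (by positivity)
    have : j / 2 < 2 ^ m := by omega
    calc a < 2 ^ m + 2 ^ m := by omega
    _ = 2 ^ (m + 1) := by ring
  have key := Nat.Prime.emultiplicity_choose Nat.prime_two hja hloga
  rw [← pow_one 2]
  rw [pow_dvd_iff_le_emultiplicity, key]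
  have hmem : k + 1 ∈ Finset.filter (fun i => 2 ^ i ≤ j % 2 ^ i + (a - j) % 2 ^ i)
      (Finset.Ico 1 (m + 1)) := by
    rw [Finset.mem_filter, Finset.mem_Ico]
    refine ⟨⟨by omega, by omega⟩, ?_⟩
    have h1 : j % 2 ^ (k + 1) = j := Nat.mod_eq_of_lt hjk
    set r := j - j / 2 with hr
    have hr1 : 1 ≤ r := by omega
    have hr2 : r ≤ 2 ^ k := by
      have : 2 ^ (k + 1) = 2 * 2 ^ k := by ring
      omega
    have hsplit : (2:ℕ) ^ m = 2 ^ (k + 1) * 2 ^ (m - (k + 1)) := by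
      rw [← pow_add]; congr 1; omega
    have haj : a - j = 2 ^ (k + 1) * (2 ^ (m - (k + 1)) - 1) + (2 ^ (k + 1) - r) := by
      have h2 : 1 ≤ 2 ^ (m - (k+1)) := Nat.one_le_two_pow
      have h3 : 2 ^ (k + 1) ≤ 2 ^ (k + 1) * 2 ^ (m - (k + 1)) :=
        Nat.le_mul_of_pos_right _ (by positivity)
      have h4 : 2 ^ (k + 1) * (2 ^ (m - (k + 1)) - 1)
          = 2 ^ (k + 1) * 2 ^ (m - (k + 1)) - 2 ^ (k + 1) := by
        rw [Nat.mul_sub, Nat.mul_one]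
      have h5 : a = 2 ^ (k + 1) * 2 ^ (m - (k + 1)) + j / 2 := by rw [ha, ← hsplit]
      rw [h4, h5]
      omega
    have h2 : (a - j) % 2 ^ (k + 1) = 2 ^ (k + 1) - r := by
      rw [haj, Nat.mul_add_mod]
      exact Nat.mod_eq_of_lt (by omega)
    rw [h1, h2]
    omega
  have hcard : 1 ≤ (Finset.filter (fun i => 2 ^ i ≤ j % 2 ^ i + (a - j) % 2 ^ i)
      (Finset.Ico 1 (m + 1))).card := Finset.card_pos.mpr ⟨_, hmem⟩
  exact_mod_cast Nat.one_le_cast.mpr hcard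
end
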